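/- Let T ∈ BC(X) and let s, p ∈ ρ_S(T) with s ∉ [p]. Then Q_{c,s}(T)^{-1} S_L^{-1}(p,T) + S_R^{-1}(s,T) Q_{c,p}(T)^{-1} - 2 Q_{c,s}(T)^{-1} T̲ Q_{c,p}(T)^{-1} = [ (Q_{c,s}(T)^{-1} - Q_{c,p}(T)^{-1}) p - s̄ (Q_{c,s}(T)^{-1} - Q_{c,p}(T)^{-1}) ] · (p² - 2 Re(s) p + |s|²)^{-1}. -/

import Mathlib

open scoped Quaternion

/-- The 2-sphere `[p]` of a quaternion `p`. -/
def qSphere (p : ℍ[ℝ]) : Set ℍ[ℝ] := {x | x.re = p.re ∧ ‖x.im‖ = ‖p.im‖}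

/-- `Q_{c,q}(t) = q² - q(t + t̄) + t t̄` (scalar quaternionic version). -/
noncomputable def Qc (q t : ℍ[ℝ]) : ℍ[ℝ] := q ^ 2 - q * (t + star t) + t * star t

/-- `S_L^{-1}(p,t) = (p - t̄) Q_{c,p}(t)^{-1}`. -/
noncomputable def SL (p t : ℍ[ℝ]) : ℍ[ℝ] := (p - star t) * (Qc p t)⁻¹

/-- `S_R^{-1}(s,t) = Q_{c,s}(t)^{-1} (s - t̄)`. -/
noncomputable def SR (s t : ℍ[ℝ]) : ℍ[ℝ] := (Qc s t)⁻¹ * (s - star t)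

/-! Write `A = Q_{c,s}(t)`, `B = Q_{c,p}(t)`, `τ = t + t̄` and
`P = Q_{c,p}(s) = p² - 2 Re(s) p + |s|²`; both sides equal `A⁻¹ (p + s - τ) B⁻¹`. On the right,
`A⁻¹ - B⁻¹ = A⁻¹ (B - A) B⁻¹`, and since `p` commutes with `B` and `s̄` with `A`, the expression
`X p - s̄ X` passes through `A⁻¹ (·) B⁻¹`. The key identity `(B - A) p - s̄ (B - A) = (p + s - τ) P`
comes from `B - A = P + (p - s)(s + s̄ - τ)` with `s + s̄ - τ` real, together with
`(p - s) p - s̄ (p - s) = P`. Finally `P` commutes with `B`, and `P ≠ 0` because every root `p` of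
`Q_{c,·}(s)` lies on the sphere `[s]`. -/

open Quaternion

theorem Quaternion.coe_two : ((2 : ℝ) : ℍ[ℝ]) = 2 := rfl

theorem Quaternion.normSq_eq_re_sq_add_normSq_im (a : ℍ[ℝ]) :
    normSq a = a.re ^ 2 + normSq a.im := by
  simp only [normSq_def', re_im, imI_im, imJ_im, imK_im]
  ring

theorem inv_sub_inv_mul_sub_mul_inv_sub_inv {R : Type*} [DivisionRing R] {a b x y : R}
    (ha : a ≠ 0) (hb : b ≠ 0) (hx : Commute x b) (hy : Commute y a) :
    (a⁻¹ - b⁻¹) * x - y * (a⁻¹ - b⁻¹) = a⁻¹ * ((b - a) * x - y * (b - a)) * b⁻¹ := by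
  rw [inv_sub_inv' ha hb, mul_assoc _ b⁻¹, ← hx.inv_right₀.eq, ← mul_assoc y, ← mul_assoc y,
    hy.inv_right₀.eq]
  noncomm_ring

theorem Qc_eq_sq_sub_two_re_mul_add_normSq (q t : ℍ[ℝ]) :
    Qc q t = q ^ 2 - 2 * (t.re : ℍ[ℝ]) * q + ((normSq t : ℝ) : ℍ[ℝ]) := by
  rw [Qc, self_add_star', self_mul_star, ← coe_commutes, coe_mul, coe_two]

theorem Commute.Qc_right {x q : ℍ[ℝ]} (h : Commute x q) (t : ℍ[ℝ]) : Commute x (Qc q t) := by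
  rw [Qc, self_add_star', self_mul_star]
  exact ((h.pow_right 2).sub_right (h.mul_right (coe_commute _ x).symm)).add_right
    (coe_commute _ x).symm

theorem Qc_sub_Qc (p s t : ℍ[ℝ]) :
    Qc p t - Qc s t = Qc p s + (p - s) * (s + star s - (t + star t)) := by
  simp only [Qc]
  noncomm_ring

theorem sub_mul_sub_star_mul_sub (p s : ℍ[ℝ]) : (p - s) * p - star s * (p - s) = Qc p s := by
  rw [Qc, self_add_star', ← coe_commutes, ← self_add_star', ← star_comm_self']
  noncomm_ring

theorem Qc_sub_Qc_mul_sub_star_mul (p s t : ℍ[ℝ]) :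
    (Qc p t - Qc s t) * p - star s * (Qc p t - Qc s t) = (p + s - (t + star t)) * Qc p s := by
  obtain ⟨r, hr⟩ : ∃ r : ℝ, s + star s - (t + star t) = r :=
    ⟨2 * s.re - 2 * t.re, by rw [self_add_star', self_add_star', coe_sub]⟩
  have hpP : Commute p (Qc p s) := (Commute.refl p).Qc_right s
  calc (Qc p t - Qc s t) * p - star s * (Qc p t - Qc s t)
      = Qc p s * p - star s * Qc p s + ((p - s) * p - star s * (p - s)) * r := by
        rw [Qc_sub_Qc, hr]; noncomm_ring [coe_commutes r p]
    _ = (p - star s + (s + star s - (t + star t))) * Qc p s := by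
        rw [sub_mul_sub_star_mul_sub, ← hpP.eq, hr, ← coe_commutes]; noncomm_ring
    _ = (p + s - (t + star t)) * Qc p s := by noncomm_ring

theorem mem_qSphere_of_Qc_eq_zero {p s : ℍ[ℝ]} (h : Qc p s = 0) : s ∈ qSphere p := by
  set x := p - (s.re : ℍ[ℝ]) with hx
  have hxsq : x ^ 2 = -((normSq s.im : ℝ) : ℍ[ℝ]) := by
    rw [eq_neg_iff_add_eq_zero, ← h, Qc_eq_sq_sub_two_re_mul_add_normSq,
      normSq_eq_re_sq_add_normSq_im s, hx]
    push_cast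
    noncomm_ring [coe_commutes s.re p]
  have hnorm : normSq x = normSq s.im := by
    have := congrArg normSq hxsq
    rw [map_pow, normSq_neg, normSq_coe] at this
    exact (pow_left_inj₀ normSq_nonneg normSq_nonneg two_ne_zero).1 this
  have hxre : x.re = 0 := sq_eq_neg_normSq.1 (by rw [hxsq, hnorm])
  have hxim : x = p.im := by
    rw [← re_add_im x, hxre, hx]
    simp
  refine ⟨by simpa [hx, sub_eq_zero, eq_comm] using hxre, ?_⟩
  rw [← mul_self_inj (norm_nonneg _) (norm_nonneg _), ← normSq_eq_norm_mul_self,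
    ← normSq_eq_norm_mul_self, ← hnorm, hxim]

theorem Qc_inv_mul_SL_add_SR_mul_Qc_inv (t s p : ℍ[ℝ]) :
    (Qc s t)⁻¹ * SL p t + SR s t * (Qc p t)⁻¹ -
        2 * ((Qc s t)⁻¹ * (t - ((t.re : ℝ) : ℍ[ℝ])) * (Qc p t)⁻¹) =
      (Qc s t)⁻¹ * (p + s - (t + star t)) * (Qc p t)⁻¹ := by
  rw [SL, SR, star_eq_two_re_sub t, coe_mul, coe_two]
  noncomm_ring

/-- New resolvent equation for the `Q`-functional calculus (scalar quaternionic version):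
for `s, p` in the `S`-resolvent set of `t` with `s ∉ [p]`,
`Q_{c,s}(t)^{-1} S_L^{-1}(p,t) + S_R^{-1}(s,t) Q_{c,p}(t)^{-1} - 2 Q_{c,s}(t)^{-1} t̲ Q_{c,p}(t)^{-1}
 = [(Q_{c,s}(t)^{-1} - Q_{c,p}(t)^{-1}) p - s̄ (Q_{c,s}(t)^{-1} - Q_{c,p}(t)^{-1})]
   (p² - 2 Re(s) p + |s|²)^{-1}`. -/
theorem Q_resolvent_equation (t s p : ℍ[ℝ])
    (hs : Qc s t ≠ 0) (hp : Qc p t ≠ 0) (hsp : s ∉ qSphere p) :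
    (Qc s t)⁻¹ * SL p t + SR s t * (Qc p t)⁻¹ -
        2 * ((Qc s t)⁻¹ * (t - ((t.re : ℝ) : ℍ[ℝ])) * (Qc p t)⁻¹) =
      (((Qc s t)⁻¹ - (Qc p t)⁻¹) * p - star s * ((Qc s t)⁻¹ - (Qc p t)⁻¹)) *
        (p ^ 2 - 2 * ((s.re : ℝ) : ℍ[ℝ]) * p + ((Quaternion.normSq s : ℝ) : ℍ[ℝ]))⁻¹ := by
  have hP : Qc p s ≠ 0 := mt mem_qSphere_of_Qc_eq_zero hsp
  have hpB : Commute p (Qc p t) := (Commute.refl p).Qc_right t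
  have hBP : Commute (Qc p t)⁻¹ (Qc p s) := (hpB.symm.Qc_right s).inv_left₀
  rw [← Qc_eq_sq_sub_two_re_mul_add_normSq, Qc_inv_mul_SL_add_SR_mul_Qc_inv,
    inv_sub_inv_mul_sub_mul_inv_sub_inv hs hp hpB (star_comm_self.Qc_right t),
    Qc_sub_Qc_mul_sub_star_mul]
  simp only [mul_assoc]
  rw [← mul_assoc (Qc p s), ← hBP.eq, mul_assoc, mul_inv_cancel₀ hP, mul_one]
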